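/- For a densely defined closed C-symmetric operator A, the domain decomposition D(CA*C) = D(A) ⊕ N(A*CA*C + I) holds, where the orthogonal sum is with respect to the graph inner product of CA*C. Consequently, A is C-self-adjoint if and only if N(A*CA*C + I) = {0}. -/

import Mathlib

/-!
Write `T = CA*C`. Conjugating `CAC ⊆ A*` by `C` gives `A ⊆ T`, so the graph of the closed operator
`A` is a closed subspace of the graph of `T`, and orthogonal projection onto it splits every
`h ∈ D(T)` as `f + g` with `f ∈ D(A)` and `g` orthogonal to `D(A)` in the graph inner product of
`T`. By the definition of the adjoint, this orthogonality says exactly `A*Tg = -g`. Hence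
`D(T) = D(A)`, i.e. `T = A`, which is `C`-self-adjointness, iff that kernel is trivial.
-/

open scoped InnerProductSpace
open LinearPMap

variable {H : Type*} [NormedAddCommGroup H] [InnerProductSpace ℂ H]

/-- A conjugation on a complex inner product space: a conjugate-linear involution
satisfying `⟪Cx, Cy⟫ = ⟪y, x⟫`. -/
structure Conjugation (H : Type*) [NormedAddCommGroup H] [InnerProductSpace ℂ H] where
  toFun : H → H
  map_add' : ∀ x y, toFun (x + y) = toFun x + toFun y
  map_smulc : ∀ (c : ℂ) (x : H), toFun (c • x) = (starRingEnd ℂ c) • toFun x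
  invol : ∀ x, toFun (toFun x) = x
  inner_conj : ∀ x y, ⟪toFun x, toFun y⟫_ℂ = ⟪y, x⟫_ℂ

namespace Conjugation

instance : CoeFun (Conjugation H) fun _ => H → H := ⟨toFun⟩

lemma map_zero (C : Conjugation H) : C 0 = 0 := by
  have := C.map_smulc 0 0; simpa using this

lemma mem_of_mem_image (C : Conjugation H) {S : Set H} {x : H} (hx : x ∈ C.toFun '' S) :
    C x ∈ S := by
  obtain ⟨t, ht, rfl⟩ := hx
  rwa [C.invol]

/-- The image `C(D)` of a subspace under a conjugation, as a subspace. -/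
def conjDomain (C : Conjugation H) (D : Submodule ℂ H) : Submodule ℂ H where
  carrier := C.toFun '' (D : Set H)
  add_mem' := by
    rintro a b ⟨x, hx, rfl⟩ ⟨y, hy, rfl⟩
    exact ⟨x + y, D.add_mem hx hy, (C.map_add' x y).symm ▸ rfl⟩
  zero_mem' := ⟨0, D.zero_mem, C.map_zero⟩
  smul_mem' := by
    rintro c a ⟨x, hx, rfl⟩
    refine ⟨(starRingEnd ℂ c) • x, D.smul_mem _ hx, ?_⟩
    rw [C.map_smulc]; simp

lemma conj_mem (C : Conjugation H) {D : Submodule ℂ H} {x : H} (hx : x ∈ C.conjDomain D) :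
    C x ∈ D := C.mem_of_mem_image hx

/-- The operator `C T C` with domain `C(D(T))`. -/
noncomputable def conjOp (C : Conjugation H) (T : H →ₗ.[ℂ] H) : H →ₗ.[ℂ] H where
  domain := C.conjDomain T.domain
  toFun :=
  { toFun := fun x => C (T ⟨C ↑x, C.conj_mem x.2⟩)
    map_add' := by
      intro x y
      have h : (⟨C ↑(x + y), C.conj_mem (x + y).2⟩ : T.domain)
          = ⟨C ↑x, C.conj_mem x.2⟩ + ⟨C ↑y, C.conj_mem y.2⟩ := by
        apply Subtype.ext; simp [C.map_add']
      try dsimp only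
      rw [h, T.map_add, C.map_add']
    map_smul' := by
      intro c x
      have h : (⟨C ↑(c • x), C.conj_mem (c • x).2⟩ : T.domain)
          = (starRingEnd ℂ c) • (⟨C ↑x, C.conj_mem x.2⟩ : T.domain) := by
        apply Subtype.ext; simp [C.map_smulc]
      try dsimp only
      rw [h, T.map_smul, C.map_smulc]; simp }

/-- `A` is `C`-symmetric: `CAC ⊆ A*`. -/
noncomputable def IsCSymmetric [CompleteSpace H] (C : Conjugation H) (A : H →ₗ.[ℂ] H) : Prop :=
  C.conjOp A ≤ A†

/-- `A` is `C`-self-adjoint: `CAC = A*`. -/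
noncomputable def IsCSelfAdjoint [CompleteSpace H] (C : Conjugation H) (A : H →ₗ.[ℂ] H) : Prop :=
  C.conjOp A = A†

end Conjugation
variable [CompleteSpace H]

open scoped InnerProductSpace in
/-- The kernel `N(I + A*CA*C)`. -/
noncomputable def kerIplusAstarCAstarC (C : Conjugation H) (A : H →ₗ.[ℂ] H) : Set H :=
  {g | ∃ hg : g ∈ (C.conjOp (A†)).domain, ∃ h2 : (C.conjOp (A†)) ⟨g, hg⟩ ∈ (A†).domain,
      g + A† ⟨(C.conjOp (A†)) ⟨g, hg⟩, h2⟩ = 0}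

/-- The kernel `N(I + CA*CA*)`. -/
noncomputable def kerIplusCAstarCAstar (C : Conjugation H) (A : H →ₗ.[ℂ] H) : Set H :=
  {g | ∃ hg : g ∈ (A†).domain, ∃ h2 : A† ⟨g, hg⟩ ∈ (C.conjOp (A†)).domain,
      g + (C.conjOp (A†)) ⟨A† ⟨g, hg⟩, h2⟩ = 0}

/-- The kernel `N(I + A*B*)` where `B = CAC`. -/
noncomputable def kerIplusAstarBstar (C : Conjugation H) (A : H →ₗ.[ℂ] H) : Set H :=
  {g | ∃ hg : g ∈ ((C.conjOp A)†).domain, ∃ h2 : (C.conjOp A)† ⟨g, hg⟩ ∈ (A†).domain,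
      g + A† ⟨(C.conjOp A)† ⟨g, hg⟩, h2⟩ = 0}

open scoped InnerProductSpace in
/-- The orthogonal complement of `S` within `W`, with respect to the graph inner
product `⟪f, g⟫ + ⟪Tf, Tg⟫` of `T`. -/
def graphOrthComplIn (T : H →ₗ.[ℂ] H) (W S : Set H) : Set H :=
  {g | g ∈ W ∧ ∃ hg : g ∈ T.domain, ∀ f ∈ S, ∀ hf : f ∈ T.domain,
      ⟪f, g⟫_ℂ + ⟪T ⟨f, hf⟩, T ⟨g, hg⟩⟫_ℂ = 0}

/-- The deficiency space `N(T* - μ)`. -/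
noncomputable def defectSpace (T : H →ₗ.[ℂ] H) (μ : ℂ) : Submodule ℂ H where
  carrier := {z | ∃ hz : z ∈ (T†).domain, T† ⟨z, hz⟩ = μ • z}
  add_mem' := by
    rintro a b ⟨ha, hva⟩ ⟨hb, hvb⟩
    refine ⟨(T†).domain.add_mem ha hb, ?_⟩
    have h : (⟨a + b, (T†).domain.add_mem ha hb⟩ : (T†).domain) = ⟨a, ha⟩ + ⟨b, hb⟩ := rfl
    rw [h, LinearPMap.map_add, hva, hvb, smul_add]
  zero_mem' := by
    refine ⟨(T†).domain.zero_mem, ?_⟩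
    have h : (⟨(0 : H), (T†).domain.zero_mem⟩ : (T†).domain) = 0 := rfl
    rw [h, LinearPMap.map_zero, smul_zero]
  smul_mem' := by
    rintro c a ⟨ha, hva⟩
    refine ⟨(T†).domain.smul_mem c ha, ?_⟩
    have h : (⟨c • a, (T†).domain.smul_mem c ha⟩ : (T†).domain) = c • ⟨a, ha⟩ := rfl
    rw [h, LinearPMap.map_smul, hva, smul_comm]

namespace LinearPMap

variable {𝕜 E F : Type*} [RCLike 𝕜] [NormedAddCommGroup E] [InnerProductSpace 𝕜 E]
  [NormedAddCommGroup F] [InnerProductSpace 𝕜 F]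

theorem exists_add_adjoint_apply_eq_zero_iff [CompleteSpace E] {A : E →ₗ.[𝕜] F}
    (hA : Dense (A.domain : Set E)) (x : F) (g : E) :
    (∃ hx : x ∈ A†.domain, g + A† ⟨x, hx⟩ = 0) ↔
      ∀ f : A.domain, ⟪(f : E), g⟫_𝕜 + ⟪A f, x⟫_𝕜 = 0 := by
  constructor
  · rintro ⟨hx, hgx⟩ f
    rw [eq_neg_of_add_eq_zero_left hgx, inner_neg_right, ← inner_conj_symm (f : E),
      adjoint_isFormalAdjoint hA ⟨x, hx⟩ f, inner_conj_symm, neg_add_cancel]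
  · intro horth
    have hadj : ∀ f : A.domain, ⟪-g, (f : E)⟫_𝕜 = ⟪x, A f⟫_𝕜 := fun f => by
      rw [inner_neg_left, ← inner_conj_symm x, eq_neg_of_add_eq_zero_right (horth f),
        starRingEnd_apply, star_neg, ← starRingEnd_apply, inner_conj_symm]
    have hx := mem_adjoint_domain_of_exists x ⟨-g, hadj⟩
    exact ⟨hx, by rw [adjoint_apply_eq hA ⟨x, hx⟩ hadj, add_neg_cancel]⟩

theorem exists_add_graph_orthogonal_of_le [CompleteSpace E] [CompleteSpace F]
    {A T : E →ₗ.[𝕜] F} (hA : A.IsClosed) (hAT : A ≤ T) (h : T.domain) :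
    ∃ f : A.domain, ∃ g : T.domain,
      (∀ u : A.domain, ⟪(u : E), g⟫_𝕜 + ⟪A u, T g⟫_𝕜 = 0) ∧ (h : E) = f + g := by
  let e := WithLp.prodContinuousLinearEquiv 2 𝕜 E F
  let K := A.graph.comap (e : WithLp 2 (E × F) →ₗ[𝕜] E × F)
  have : CompleteSpace K := (hA.preimage e.continuous).completeSpace_coe
  obtain ⟨p, hp, q, hq, hpq⟩ := K.exists_add_mem_mem_orthogonal (e.symm (h, T h))
  obtain ⟨f, hfp⟩ : ∃ f : A.domain, e p = ((f : E), A f) := by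
    obtain ⟨f, hf1, hf2⟩ := A.mem_graph_iff.mp hp
    exact ⟨f, Prod.ext hf1.symm hf2.symm⟩
  let g : T.domain := h - Submodule.inclusion hAT.1 f
  have hgq : q = e.symm ((g : E), T g) := by
    rw [e.eq_symm_apply, eq_sub_of_add_eq' hpq.symm, _root_.map_sub e, e.apply_symm_apply, hfp,
      Prod.mk_sub_mk, LinearPMap.map_sub, ← apply_comp_inclusion hAT]
    rfl
  refine ⟨f, g, fun u => ?_, by simp [g]⟩
  have hu : e.symm (u, A u) ∈ K := by simp [K]
  simpa [e, WithLp.prod_inner_apply, hgq] using K.inner_right_of_mem_orthogonal hu hq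

end LinearPMap

theorem eq_zero_of_inner_self_add_inner_self_eq_zero {𝕜 E F : Type*} [RCLike 𝕜]
    [NormedAddCommGroup E] [InnerProductSpace 𝕜 E] [NormedAddCommGroup F] [InnerProductSpace 𝕜 F]
    {x : E} {y : F} (h : ⟪x, x⟫_𝕜 + ⟪y, y⟫_𝕜 = 0) : x = 0 := by
  have hre := congrArg RCLike.re h
  rw [_root_.map_add, inner_self_eq_norm_sq, inner_self_eq_norm_sq, _root_.map_zero] at hre
  have hx : ‖x‖ ^ 2 = 0 := by linarith [sq_nonneg ‖x‖, sq_nonneg ‖y‖]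
  simpa using hx

namespace Conjugation

section

variable {E : Type*} [NormedAddCommGroup E] [InnerProductSpace ℂ E] (C : Conjugation E)

theorem mem_conjOp_domain_iff {T : E →ₗ.[ℂ] E} {x : E} :
    x ∈ (C.conjOp T).domain ↔ C x ∈ T.domain :=
  ⟨C.conj_mem, fun h => ⟨C x, h, C.invol x⟩⟩

theorem conjOp_mono {S T : E →ₗ.[ℂ] E} (h : S ≤ T) : C.conjOp S ≤ C.conjOp T :=
  ⟨fun _ hx => C.mem_conjOp_domain_iff.mpr (h.1 (C.conj_mem hx)),
    fun _ _ hxy => congrArg C.toFun (h.2 (congrArg C.toFun hxy))⟩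

@[simp]
theorem conjOp_conjOp (T : E →ₗ.[ℂ] E) : C.conjOp (C.conjOp T) = T := by
  refine LinearPMap.ext (by ext x; simp only [mem_conjOp_domain_iff, C.invol]) fun x _ _ => ?_
  show C (C (T ⟨C (C x), _⟩)) = _
  rw [C.invol]
  congr 1
  exact Subtype.ext (C.invol x)

theorem conjOp_eq_iff {S T : E →ₗ.[ℂ] E} : C.conjOp S = T ↔ S = C.conjOp T :=
  ⟨fun h => by rw [← h, conjOp_conjOp], fun h => by rw [h, conjOp_conjOp]⟩

end

variable {C : Conjugation H} {A : H →ₗ.[ℂ] H}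

theorem IsCSymmetric.le_conjOp_adjoint (hsym : C.IsCSymmetric A) : A ≤ C.conjOp A† := by
  simpa using C.conjOp_mono hsym

theorem isCSelfAdjoint_iff_conjOp_adjoint_eq : C.IsCSelfAdjoint A ↔ C.conjOp A† = A :=
  C.conjOp_eq_iff.trans eq_comm

end Conjugation

theorem mem_kerIplusAstarCAstarC_iff {C : Conjugation H} {A : H →ₗ.[ℂ] H}
    (hA : Dense (A.domain : Set H)) {g : H} :
    g ∈ kerIplusAstarCAstarC C A ↔ ∃ hg : g ∈ (C.conjOp A†).domain,
      ∀ f : A.domain, ⟪(f : H), g⟫_ℂ + ⟪A f, C.conjOp A† ⟨g, hg⟩⟫_ℂ = 0 :=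
  exists_congr fun _ => LinearPMap.exists_add_adjoint_apply_eq_zero_iff hA _ _

theorem stmt_16 (C : Conjugation H) (A : H →ₗ.[ℂ] H) (hA : Dense (A.domain : Set H))
    (hclosed : A.IsClosed) (hsym : C.IsCSymmetric A) :
    ((A.domain : Set H) ⊆ ((C.conjOp (A†)).domain : Set H))
    ∧ kerIplusAstarCAstarC C A ⊆ ((C.conjOp (A†)).domain : Set H)
    ∧ (∀ f ∈ (A.domain : Set H), ∀ g ∈ kerIplusAstarCAstarC C A,
        ∀ (hf : f ∈ (C.conjOp (A†)).domain) (hg : g ∈ (C.conjOp (A†)).domain),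
        ⟪f, g⟫_ℂ + ⟪(C.conjOp (A†)) ⟨f, hf⟩, (C.conjOp (A†)) ⟨g, hg⟩⟫_ℂ = 0)
    ∧ (∀ h ∈ ((C.conjOp (A†)).domain : Set H),
        ∃ f ∈ (A.domain : Set H), ∃ g ∈ kerIplusAstarCAstarC C A, h = f + g)
    ∧ (C.IsCSelfAdjoint A ↔ kerIplusAstarCAstarC C A = {(0 : H)}) := by
  have hAT := hsym.le_conjOp_adjoint
  have horth : ∀ f ∈ (A.domain : Set H), ∀ g ∈ kerIplusAstarCAstarC C A,
      ∀ (hf : f ∈ (C.conjOp (A†)).domain) (hg : g ∈ (C.conjOp (A†)).domain),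
      ⟪f, g⟫_ℂ + ⟪(C.conjOp (A†)) ⟨f, hf⟩, (C.conjOp (A†)) ⟨g, hg⟩⟫_ℂ = 0 := by
    intro f hf g hg _ _
    obtain ⟨_, hperp⟩ := (mem_kerIplusAstarCAstarC_iff hA).mp hg
    rw [← hAT.2 (x := ⟨f, hf⟩) rfl]
    exact hperp ⟨f, hf⟩
  have hdecomp : ∀ h ∈ ((C.conjOp (A†)).domain : Set H),
      ∃ f ∈ (A.domain : Set H), ∃ g ∈ kerIplusAstarCAstarC C A, h = f + g := by
    intro h hh
    obtain ⟨f, g, hperp, hfg⟩ := LinearPMap.exists_add_graph_orthogonal_of_le hclosed hAT ⟨h, hh⟩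
    exact ⟨f, f.2, g, (mem_kerIplusAstarCAstarC_iff hA).mpr ⟨g.2, hperp⟩, hfg⟩
  refine ⟨hAT.1, fun g hg => hg.1, horth, hdecomp, ?_⟩
  rw [Conjugation.isCSelfAdjoint_iff_conjOp_adjoint_eq]
  constructor
  · intro hTA
    refine Set.eq_singleton_iff_unique_mem.mpr ⟨?_, fun g hg => ?_⟩
    · exact (mem_kerIplusAstarCAstarC_iff hA).mpr
        ⟨zero_mem _, fun _ => by simp [← ZeroMemClass.zero_def]⟩
    · have hgT : g ∈ (C.conjOp A†).domain := hg.1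
      exact eq_zero_of_inner_self_add_inner_self_eq_zero (horth g (hTA ▸ hgT) g hg hgT hgT)
  · intro hker
    refine (LinearPMap.eq_of_le_of_domain_eq hAT (le_antisymm hAT.1 fun h hh => ?_)).symm
    obtain ⟨f, hf, g, hg, rfl⟩ := hdecomp h hh
    rw [hker, Set.mem_singleton_iff] at hg
    rwa [hg, add_zero]
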